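/- arXiv:2305.08798 — 2 statements merged into one kernel-verified Lean document; each statement's English description precedes it below -/
import Mathlib

section
/- Let ℓ≥2 be an integer, R a commutative ring with unity, ∘ ∈ {0,−}, and (I,{J,K}) ∈ P̃•([ℓ]) with min(J∪K)∈J. For every p ∈ R_{0,[ℓ]} there exists q ∈ R_{0,{nd}⊔I} ⊗_R R^{cx}_{{nd}⊔(J∪K)} such that ℝD̃^∘_{I;J,K}·(F(p) − F(F_{I;J,K}(q))) ∈ I_{0,[ℓ+1]}; that is, ℝD̃^∘_{I;J,K}·(Im F) ⊆ ℝD̃^∘_{I;J,K}·(Im(F∘F_{I;J,K})) + I_{0,[ℓ+1]}. -/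
open MvPolynomial Finset TensorProduct

noncomputable section

/-- `[ℓ] = {1, …, ℓ}`. -/
abbrev Iset (n : ℕ) : Finset ℕ := Finset.Icc 1 n

/-! ### The "complex" rings `R_S = R[(D_{J,K})_{{J,K} ∈ P•(S)}]`.
An unordered pair `{J,K}` with `J ⊔ K = S` and `2 ≤ |J| ≤ |S|-2` is represented by
its unique member containing `min S`. -/

/-- Index type for the variables `D_{J,K}`, `{J,K} ∈ P•(S)`: the canonical member
of the pair is the one whose minimum is `min S`. -/
abbrev CxIdx (S : Finset ℕ) : Type :=
  {J : Finset ℕ // J ⊆ S ∧ 2 ≤ J.card ∧ 2 ≤ (S \ J).card ∧ J.min = S.min}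

/-- The polynomial ring `R_S` on the variables `D_{J,K}`, `{J,K} ∈ P•(S)`. -/
abbrev CxRing (R : Type) [CommRing R] (S : Finset ℕ) : Type := MvPolynomial (CxIdx S) R

def cxXv (R : Type) [CommRing R] (S J : Finset ℕ) : CxRing R S :=
  if h : J ⊆ S ∧ 2 ≤ J.card ∧ 2 ≤ (S \ J).card ∧ J.min = S.min then X ⟨J, h⟩ else 0

/-- The variable `D_{J,K}` of `R_S` (equal to `0` if `{J,K} ∉ P•(S)`). -/
def cxD (R : Type) [CommRing R] (S J K : Finset ℕ) : CxRing R S :=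
  if Disjoint J K ∧ J ∪ K = S then (if J.min ≤ K.min then cxXv R S J else cxXv R S K)
  else 0

/-- `{J,K} ⋂̸ {J',K'}`:  `J ⊄ J'`, `J ⊄ K'`, `J' ⊄ J` and `K' ⊄ J`. -/
abbrev NcapCx (J J' K' : Finset ℕ) : Prop :=
  ¬ J ⊆ J' ∧ ¬ J ⊆ K' ∧ ¬ J' ⊆ J ∧ ¬ K' ⊆ J

/-- The element `R^S_{abcd}`. -/
def cxRel (R : Type) [CommRing R] (S : Finset ℕ) (a b c d : ℕ) : CxRing R S :=
  (∑ J ∈ S.powerset,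
    if 2 ≤ J.card ∧ 2 ≤ (S \ J).card ∧ a ∈ J ∧ b ∈ J ∧ c ∈ S \ J ∧ d ∈ S \ J
    then cxD R S J (S \ J) else 0)
  - ∑ J ∈ S.powerset,
    if 2 ≤ J.card ∧ 2 ≤ (S \ J).card ∧ a ∈ J ∧ c ∈ J ∧ b ∈ S \ J ∧ d ∈ S \ J
    then cxD R S J (S \ J) else 0

/-- The ideal `I_S ⊂ R_S`. -/
def cxIdeal (R : Type) [CommRing R] (S : Finset ℕ) : Ideal (CxRing R S) :=
  Ideal.span (
    {x | ∃ J K J' K' : Finset ℕ,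
      (Disjoint J K ∧ J ∪ K = S ∧ 2 ≤ J.card ∧ 2 ≤ K.card) ∧
      (Disjoint J' K' ∧ J' ∪ K' = S ∧ 2 ≤ J'.card ∧ 2 ≤ K'.card) ∧
      NcapCx J J' K' ∧ x = cxD R S J K * cxD R S J' K'} ∪
    {x | ∃ a b c d : ℕ, a ∈ S ∧ b ∈ S ∧ c ∈ S ∧ d ∈ S ∧ a ≠ b ∧ c ≠ d ∧
      x = cxRel R S a b c d})

/-- The homomorphism `F : R_{[ℓ]} → R_{[ℓ+1]}`, `D_{J,K} ↦ D_{J∪{ℓ+1},K} + D_{J,K∪{ℓ+1}}`. -/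
def Fcx (R : Type) [CommRing R] (ℓ : ℕ) : CxRing R (Iset ℓ) →ₐ[R] CxRing R (Iset (ℓ + 1)) :=
  aeval fun i =>
    cxD R (Iset (ℓ + 1)) (i.1 ∪ {ℓ + 1}) (Iset ℓ \ i.1)
    + cxD R (Iset (ℓ + 1)) i.1 ((Iset ℓ \ i.1) ∪ {ℓ + 1})

/-- The homomorphism `F_P : R_{{nd}⊔B} → R_{[ℓ]}`, `D_{J',K'} ↦ D_{P∪(J'-{nd}),K'}` for
`nd ∈ J'`; here `nd = 0`. -/
def FJcx (R : Type) [CommRing R] (ℓ : ℕ) (P B : Finset ℕ) :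
    CxRing R (insert 0 B) →ₐ[R] CxRing R (Iset ℓ) :=
  aeval fun i => cxD R (Iset ℓ) (P ∪ i.1.erase 0) (insert 0 B \ i.1)

/-- The homomorphism `F_{J,K} : R_{{nd}⊔J} ⊗ R_{{nd}⊔K} → R_{[ℓ]}` acting by `F_K` on the
first factor and by `F_J` on the second. -/
def FJKcx (R : Type) [CommRing R] (ℓ : ℕ) (J K : Finset ℕ) :
    TensorProduct R (CxRing R (insert 0 J)) (CxRing R (insert 0 K)) →ₐ[R] CxRing R (Iset ℓ) :=
  Algebra.TensorProduct.productMap (FJcx R ℓ K J) (FJcx R ℓ J K)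

/-- The submodule `A ⊗ I_B + I_A ⊗ B` of `A ⊗_R B`. -/
def mixedSub (R : Type) [CommRing R] {A B : Type} [CommRing A] [CommRing B]
    [Algebra R A] [Algebra R B] (IA : Ideal A) (IB : Ideal B) :
    Submodule R (TensorProduct R A B) :=
  Submodule.span R
    ({x | ∃ p q, q ∈ IB ∧ x = p ⊗ₜ[R] q} ∪ {x | ∃ p q, p ∈ IA ∧ x = p ⊗ₜ[R] q})

/-! ### The "real" rings `R_{0,S}` with variables `ℝE_{J,K}`, `{J,K} ∈ P(S)`, and
`ℝD_{I;J,K}`, `(I,{J,K}) ∈ P̃•(S)`.  The unordered pair `{J,K}` is represented by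
its member whose minimum equals the minimum of `J ∪ K`. -/

abbrev EIdx (S : Finset ℕ) : Type := {J : Finset ℕ // J ⊆ S ∧ J.min = S.min}

abbrev DIdx (S : Finset ℕ) : Type :=
  {p : Finset ℕ × Finset ℕ //
    p.1 ⊆ S ∧ p.2 ⊆ S \ p.1 ∧ 1 ≤ p.1.card ∧ 2 ≤ (S \ p.1).card ∧ p.2.min = (S \ p.1).min}

/-- The polynomial ring `R_{0,S}`. -/
abbrev RRing (R : Type) [CommRing R] (S : Finset ℕ) : Type :=
  MvPolynomial (EIdx S ⊕ DIdx S) R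

def reXe (R : Type) [CommRing R] (S J : Finset ℕ) : RRing R S :=
  if h : J ⊆ S ∧ J.min = S.min then X (Sum.inl ⟨J, h⟩) else 0

/-- The variable `ℝE_{J,K}` of `R_{0,S}` (equal to `0` if `{J,K} ∉ P(S)`). -/
def reE (R : Type) [CommRing R] (S J K : Finset ℕ) : RRing R S :=
  if Disjoint J K ∧ J ∪ K = S then (if J.min ≤ K.min then reXe R S J else reXe R S K)
  else 0

def reXd (R : Type) [CommRing R] (S I J : Finset ℕ) : RRing R S :=
  if h : I ⊆ S ∧ J ⊆ S \ I ∧ 1 ≤ I.card ∧ 2 ≤ (S \ I).card ∧ J.min = (S \ I).min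
  then X (Sum.inr ⟨(I, J), h⟩) else 0

/-- The variable `ℝD_{I;J,K}` of `R_{0,S}` (equal to `0` if `(I,{J,K}) ∉ P̃•(S)`). -/
def reD (R : Type) [CommRing R] (S I J K : Finset ℕ) : RRing R S :=
  if Disjoint I (J ∪ K) ∧ Disjoint J K ∧ I ∪ (J ∪ K) = S then
    (if J.min ≤ K.min then reXd R S I J else reXd R S I K)
  else 0

/-- The sign `ε_{J,K}`: `1` if `min (J ∪ K) ∈ J` and `-1` otherwise. -/
def epsm (J K : Finset ℕ) : ℤ := if J.min ≤ K.min then 1 else -1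

/-- `{J,K} ⪯ {J',K'}`. -/
abbrev preceq (J K J' K' : Finset ℕ) : Prop := (J ⊆ J' ∧ K ⊆ K') ∨ (J ⊆ K' ∧ K ⊆ J')

/-- `{J,K} ∈ P(S)`. -/
abbrev validE (S J K : Finset ℕ) : Prop := Disjoint J K ∧ J ∪ K = S

/-- `(I,{J,K}) ∈ P̃•(S)`. -/
abbrev validD (S I J K : Finset ℕ) : Prop :=
  Disjoint I (J ∪ K) ∧ Disjoint J K ∧ I ∪ (J ∪ K) = S ∧ 1 ≤ I.card ∧ 2 ≤ (J ∪ K).card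

/-- The element `E^S_{abc}`. -/
def relE (R : Type) [CommRing R] (S : Finset ℕ) (a b c : ℕ) : RRing R S :=
  (∑ I ∈ S.powerset, ∑ J ∈ (S \ I).powerset,
    if 1 ≤ I.card ∧ 2 ≤ (S \ I).card ∧ a ∈ J ∧ b ∈ J ∧ c ∈ I
    then epsm J ((S \ I) \ J) • reD R S I J ((S \ I) \ J) else 0)
  - (∑ I ∈ S.powerset, ∑ J ∈ (S \ I).powerset,
    if 1 ≤ I.card ∧ 2 ≤ (S \ I).card ∧ a ∈ J ∧ c ∈ J ∧ b ∈ I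
    then epsm J ((S \ I) \ J) • reD R S I J ((S \ I) \ J) else 0)
  - ∑ I ∈ S.powerset, ∑ J ∈ (S \ I).powerset,
    if 1 ≤ I.card ∧ 2 ≤ (S \ I).card ∧ a ∈ I ∧ b ∈ J ∧ c ∈ (S \ I) \ J
    then epsm J ((S \ I) \ J) • reD R S I J ((S \ I) \ J) else 0

/-- The element `Σ_{{J,K} ∈ P(S)} ℝE_{J,K}`. -/
def relEsum (R : Type) [CommRing R] (S : Finset ℕ) : RRing R S :=
  ∑ J ∈ S.powerset.filter (fun J => J.min = S.min), reE R S J (S \ J)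

/-- The ideal `I_{0,S} ⊂ R_{0,S}`. -/
def reIdeal (R : Type) [CommRing R] (S : Finset ℕ) : Ideal (RRing R S) :=
  Ideal.span (
    {x | ∃ J K J' K' : Finset ℕ, validE S J K ∧ validE S J' K' ∧
      x = reE R S J K * reE R S J' K'} ∪
    {x | ∃ J K I' J' K' : Finset ℕ, validE S J K ∧ validD S I' J' K' ∧
      ¬ preceq J' K' J K ∧ x = reE R S J K * reD R S I' J' K'} ∪
    {x | ∃ I J K I' J' K' : Finset ℕ, validD S I J K ∧ validD S I' J' K' ∧
      ¬ preceq J K J' K' ∧ ¬ preceq J' K' J K ∧ ¬ J ∪ K ⊆ I' ∧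
      x = reD R S I J K * reD R S I' J' K'} ∪
    {relEsum R S} ∪
    {x | ∃ a b c : ℕ, a ∈ S ∧ b ∈ S ∧ c ∈ S ∧ a ≠ b ∧ a ≠ c ∧ b ≠ c ∧
      x = relE R S a b c})

/-- The element `G_{abc}` of Remark `RcM04rel_e2b2`. -/
def relG (R : Type) [CommRing R] (S : Finset ℕ) (a b c : ℕ) : RRing R S :=
  (∑ I ∈ S.powerset, ∑ J ∈ (S \ I).powerset,
    if 1 ≤ I.card ∧ 2 ≤ (S \ I).card ∧ a ∈ J ∧ b ∉ I ∧ c ∈ I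
    then epsm J ((S \ I) \ J) • reD R S I J ((S \ I) \ J) else 0)
  - ∑ I ∈ S.powerset, ∑ J ∈ (S \ I).powerset,
    if 1 ≤ I.card ∧ 2 ≤ (S \ I).card ∧ a ∈ J ∧ b ∈ I ∧ c ∉ I
    then epsm J ((S \ I) \ J) • reD R S I J ((S \ I) \ J) else 0

/-- The homomorphism `F : R_{0,[ℓ]} → R_{0,[ℓ+1]}`. -/
def Fre (R : Type) [CommRing R] (ℓ : ℕ) : RRing R (Iset ℓ) →ₐ[R] RRing R (Iset (ℓ + 1)) :=
  aeval fun ix =>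
    match ix with
    | Sum.inl e =>
        reE R (Iset (ℓ + 1)) (e.1 ∪ {ℓ + 1}) (Iset ℓ \ e.1)
        + reE R (Iset (ℓ + 1)) e.1 ((Iset ℓ \ e.1) ∪ {ℓ + 1})
    | Sum.inr d =>
        reD R (Iset (ℓ + 1)) (d.1.1 ∪ {ℓ + 1}) d.1.2 ((Iset ℓ \ d.1.1) \ d.1.2)
        + reD R (Iset (ℓ + 1)) d.1.1 (d.1.2 ∪ {ℓ + 1}) ((Iset ℓ \ d.1.1) \ d.1.2)
        + reD R (Iset (ℓ + 1)) d.1.1 d.1.2 (((Iset ℓ \ d.1.1) \ d.1.2) ∪ {ℓ + 1})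

/-- `ℝẼ⁰_{J,K} = ℝD_{{ℓ+1};J,K} ∈ R_{0,[ℓ+1]}`. -/
def reEt0 (R : Type) [CommRing R] (ℓ : ℕ) (J K : Finset ℕ) : RRing R (Iset (ℓ + 1)) :=
  reD R (Iset (ℓ + 1)) {ℓ + 1} J K

/-- `ℝẼ⁻_{J,K} = ℝE_{J,K∪{ℓ+1}} ∈ R_{0,[ℓ+1]}`. -/
def reEtm (R : Type) [CommRing R] (ℓ : ℕ) (J K : Finset ℕ) : RRing R (Iset (ℓ + 1)) :=
  reE R (Iset (ℓ + 1)) J (K ∪ {ℓ + 1})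

/-- `ℝD̃⁰_{I;J,K} ∈ R_{0,[ℓ+1]}` (for `(I,{J,K})` written with `min (J∪K) ∈ J`). -/
def reDt0 (R : Type) [CommRing R] (ℓ : ℕ) (I J K : Finset ℕ) : RRing R (Iset (ℓ + 1)) :=
  if 1 ∈ I then reD R (Iset (ℓ + 1)) I (J ∪ {ℓ + 1}) K
  else reD R (Iset (ℓ + 1)) (I ∪ {ℓ + 1}) J K

/-- `ℝD̃⁻_{I;J,K} = ℝD_{I;J,K∪{ℓ+1}} ∈ R_{0,[ℓ+1]}`. -/
def reDtm (R : Type) [CommRing R] (ℓ : ℕ) (I J K : Finset ℕ) : RRing R (Iset (ℓ + 1)) :=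
  reD R (Iset (ℓ + 1)) I J (K ∪ {ℓ + 1})

/-- The homomorphism `F_{J,K} : R^{cx}_{{nd}⊔[ℓ]} → R_{0,[ℓ]}`,
`D_{J',K'} ↦ (-1)^{|K|} ε_{J∩K',K∩K'} ℝD_{J'-{nd};J∩K',K∩K'}` for `nd ∈ J'`; here `nd = 0`. -/
def FJKre (R : Type) [CommRing R] (ℓ : ℕ) (J K : Finset ℕ) :
    CxRing R (insert 0 (Iset ℓ)) →ₐ[R] RRing R (Iset ℓ) :=
  aeval fun i =>
    ((-1 : ℤ) ^ K.card *
        epsm (J ∩ (insert 0 (Iset ℓ) \ i.1)) (K ∩ (insert 0 (Iset ℓ) \ i.1))) •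
      reD R (Iset ℓ) (i.1.erase 0)
        (J ∩ (insert 0 (Iset ℓ) \ i.1)) (K ∩ (insert 0 (Iset ℓ) \ i.1))

/-- The homomorphism `F²_{I;J,K} : R^{cx}_{{nd}⊔(J∪K)} → R_{0,[ℓ]}`,
`D_{J',K'} ↦ (-1)^{|K|} ε_{J∩K',K∩K'} ℝD_{I∪(J'-{nd});J∩K',K∩K'}` for `nd ∈ J'`;
here `nd = 0`. -/
def F2IJK (R : Type) [CommRing R] (ℓ : ℕ) (I J K : Finset ℕ) :
    CxRing R (insert 0 (J ∪ K)) →ₐ[R] RRing R (Iset ℓ) :=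
  aeval fun i =>
    ((-1 : ℤ) ^ K.card *
        epsm (J ∩ (insert 0 (J ∪ K) \ i.1)) (K ∩ (insert 0 (J ∪ K) \ i.1))) •
      reD R (Iset ℓ) (I ∪ i.1.erase 0)
        (J ∩ (insert 0 (J ∪ K) \ i.1)) (K ∩ (insert 0 (J ∪ K) \ i.1))

/-- `nd` for `{nd} ⊔ I`, identified with `min (ℤ⁺ - I)`. -/
def ndOf (I : Finset ℕ) : ℕ := sInf {n : ℕ | 0 < n ∧ n ∉ I}

/-- The homomorphism `F¹_{I;J,K} : R_{0,{nd}⊔I} → R_{0,[ℓ]}` with `nd = min (ℤ⁺ - I)`. -/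
def F1IJK (R : Type) [CommRing R] (ℓ : ℕ) (I J K : Finset ℕ) :
    RRing R (insert (ndOf I) I) →ₐ[R] RRing R (Iset ℓ) :=
  aeval fun ix =>
    match ix with
    | Sum.inl e =>
        if ndOf I ∈ e.1 then
          reE R (Iset ℓ) (J ∪ e.1.erase (ndOf I)) (K ∪ (insert (ndOf I) I \ e.1))
        else
          reE R (Iset ℓ) (J ∪ (insert (ndOf I) I \ e.1).erase (ndOf I)) (K ∪ e.1)
    | Sum.inr d =>
        if ndOf I ∈ d.1.1 then
          reD R (Iset ℓ) (d.1.1.erase (ndOf I) ∪ J ∪ K) d.1.2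
            ((insert (ndOf I) I \ d.1.1) \ d.1.2)
        else if ndOf I ∈ d.1.2 then
          reD R (Iset ℓ) d.1.1 (J ∪ d.1.2.erase (ndOf I))
            (K ∪ ((insert (ndOf I) I \ d.1.1) \ d.1.2))
        else
          reD R (Iset ℓ) d.1.1
            (J ∪ ((insert (ndOf I) I \ d.1.1) \ d.1.2).erase (ndOf I)) (K ∪ d.1.2)

/-- The homomorphism `F_{I;J,K} : R_{0,{nd}⊔I} ⊗ R^{cx}_{{nd}⊔(J∪K)} → R_{0,[ℓ]}`
induced by `F¹_{I;J,K}` and `F²_{I;J,K}`. -/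
def FIJK (R : Type) [CommRing R] (ℓ : ℕ) (I J K : Finset ℕ) :
    TensorProduct R (RRing R (insert (ndOf I) I)) (CxRing R (insert 0 (J ∪ K))) →ₐ[R]
      RRing R (Iset ℓ) :=
  Algebra.TensorProduct.productMap (F1IJK R ℓ I J K) (F2IJK R ℓ I J K)

/-!
The set of `p` admitting a `q` is an `R`-subalgebra of `R_{0,[ℓ]}`, so it suffices to treat the
variables. A variable `ℝE_{A,B}` or `ℝD_{C;A,B}` with `{J,K} ⪯ {A,B}`, `{A,B} ⪯ {J,K}` or
`J ∪ K ⊆ C` lies in the image of `F_{I;J,K}`, through `F¹` or `F²`. For every other variable,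
the summands of its image under `F` still restrict to pairs incomparable with `{J,K}` on `[ℓ]`,
so each of them times `ℝD̃^∘_{I;J,K}` is a generator of `I_{0,[ℓ+1]}`. The one variable left,
`ℝD_{I;J,K}` itself, occurs with coefficient `±ε_{J,K}` in a relation `E_{abc}` whose other
terms have already been treated, and `F` maps `E_{abc}` to the relation `E_{abc}` of `[ℓ+1]`.
-/

theorem Finset.eq_empty_of_disjoint_of_min_eq {α : Type*} [LinearOrder α] {A B : Finset α}
    (hd : Disjoint A B) (he : A.min = B.min) : A = ∅ := by
  rcases A.eq_empty_or_nonempty with h | h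
  · exact h
  · obtain ⟨a, ha⟩ := Finset.min_of_nonempty h
    exact absurd (mem_of_min (he ▸ ha)) (disjoint_left.1 hd (mem_of_min ha))

theorem mem_of_sum_mem_of_forall_ne {ι M S : Type*} [DecidableEq ι] [AddCommGroup M]
    [SetLike S M] [AddSubgroupClass S M] {G : S} {s : Finset ι} {f : ι → M} {i : ι}
    (hi : i ∈ s) (hsum : ∑ x ∈ s, f x ∈ G) (h : ∀ x ∈ s, x ≠ i → f x ∈ G) : f i ∈ G := by
  rw [← add_sum_erase s f hi] at hsum
  exact (add_mem_cancel_right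
    (sum_mem fun x hx => h x (mem_of_mem_erase hx) (ne_of_mem_erase hx))).1 hsum

namespace AlgHom

variable {R A B C : Type*} [CommRing R] [CommRing A] [CommRing B] [Semiring C]
  [Algebra R A] [Algebra R B] [Algebra R C]

def liftableSubalgebra (F : A →ₐ[R] B) (G : C →ₐ[R] A) (D : B) (𝔞 : Ideal B) :
    Subalgebra R A where
  carrier := {a | ∃ c, D * (F a - F (G c)) ∈ 𝔞}
  mul_mem' := by
    rintro a₁ a₂ ⟨c₁, h₁⟩ ⟨c₂, h₂⟩
    refine ⟨c₁ * c₂, ?_⟩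
    have key : D * (F (a₁ * a₂) - F (G (c₁ * c₂))) =
        F a₁ * (D * (F a₂ - F (G c₂))) + F (G c₂) * (D * (F a₁ - F (G c₁))) := by
      simp only [map_mul]; ring
    rw [key]
    exact add_mem (𝔞.mul_mem_left _ h₂) (𝔞.mul_mem_left _ h₁)
  add_mem' := by
    rintro a₁ a₂ ⟨c₁, h₁⟩ ⟨c₂, h₂⟩
    refine ⟨c₁ + c₂, ?_⟩
    have key : D * (F (a₁ + a₂) - F (G (c₁ + c₂))) =
        D * (F a₁ - F (G c₁)) + D * (F a₂ - F (G c₂)) := by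
      simp only [map_add]; ring
    rw [key]
    exact add_mem h₁ h₂
  algebraMap_mem' r := ⟨algebraMap R C r, by simp⟩

variable {F : A →ₐ[R] B} {G : C →ₐ[R] A} {D : B} {𝔞 : Ideal B}

theorem range_le_liftableSubalgebra : G.range ≤ F.liftableSubalgebra G D 𝔞 := by
  rintro _ ⟨c, rfl⟩
  exact ⟨c, by simp⟩

theorem mem_liftableSubalgebra_of_mul_mem {a : A} (h : D * F a ∈ 𝔞) :
    a ∈ F.liftableSubalgebra G D 𝔞 :=
  ⟨0, by simpa using h⟩

end AlgHom

section Variables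

variable (R : Type) [CommRing R]

theorem validD_swap {S C A B : Finset ℕ} (h : validD S C A B) : validD S C B A := by
  obtain ⟨h1, h2, h3, h4, h5⟩ := h
  rw [union_comm A B] at h1 h3 h5
  exact ⟨h1, h2.symm, h3, h4, h5⟩

theorem sdiff_eq_of_validD {S C A B : Finset ℕ} (h : validD S C A B) : S \ C = A ∪ B := by
  rw [← h.2.2.1, union_sdiff_cancel_left h.1]

theorem sdiff_sdiff_eq_of_validD {S C A B : Finset ℕ} (h : validD S C A B) :
    (S \ C) \ A = B := by
  rw [sdiff_eq_of_validD h, union_sdiff_cancel_left h.2.1]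

theorem ite_min_le_comm {β : Type*} {A B : Finset ℕ} (hd : Disjoint A B) (f : Finset ℕ → β) :
    (if A.min ≤ B.min then f A else f B) = if B.min ≤ A.min then f B else f A := by
  rcases lt_trichotomy A.min B.min with hlt | heq | hlt
  · rw [if_pos hlt.le, if_neg (not_le.2 hlt)]
  · rw [eq_empty_of_disjoint_of_min_eq hd heq, eq_empty_of_disjoint_of_min_eq hd.symm heq.symm]
  · rw [if_neg (not_le.2 hlt), if_pos hlt.le]

theorem reE_symm (S A B : Finset ℕ) : reE R S A B = reE R S B A := by
  unfold reE
  simp only [disjoint_comm (a := B), union_comm B A]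
  by_cases h : Disjoint A B ∧ A ∪ B = S
  · rw [if_pos h, if_pos h, ite_min_le_comm h.1 (reXe R S)]
  · rw [if_neg h, if_neg h]

theorem reD_symm (S C A B : Finset ℕ) : reD R S C A B = reD R S C B A := by
  unfold reD
  simp only [disjoint_comm (a := B), union_comm B A]
  by_cases h : Disjoint C (A ∪ B) ∧ Disjoint A B ∧ C ∪ (A ∪ B) = S
  · rw [if_pos h, if_pos h, ite_min_le_comm h.2.1 (reXd R S C)]
  · rw [if_neg h, if_neg h]

theorem EIdx_prop_of_validE {S A B : Finset ℕ} (h : validE S A B) (hm : A.min ≤ B.min) :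
    A ⊆ S ∧ A.min = S.min :=
  ⟨h.2 ▸ subset_union_left, by rw [← h.2, min_union, inf_eq_left.2 hm]⟩

theorem DIdx_prop_of_validD {S C A B : Finset ℕ} (h : validD S C A B) (hm : A.min ≤ B.min) :
    C ⊆ S ∧ A ⊆ S \ C ∧ 1 ≤ C.card ∧ 2 ≤ (S \ C).card ∧ A.min = (S \ C).min := by
  rw [sdiff_eq_of_validD h]
  exact ⟨h.2.2.1 ▸ subset_union_left, subset_union_left, h.2.2.2.1, h.2.2.2.2,
    by rw [min_union, inf_eq_left.2 hm]⟩

theorem reE_eq_X {S A B : Finset ℕ} (h : validE S A B) (hm : A.min ≤ B.min) :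
    reE R S A B = X (Sum.inl ⟨A, EIdx_prop_of_validE h hm⟩) := by
  unfold reE reXe
  rw [if_pos h, if_pos hm, dif_pos]

theorem reD_eq_X {S C A B : Finset ℕ} (h : validD S C A B) (hm : A.min ≤ B.min) :
    reD R S C A B = X (Sum.inr ⟨(C, A), DIdx_prop_of_validD h hm⟩) := by
  unfold reD reXd
  rw [if_pos ⟨h.1, h.2.1, h.2.2.1⟩, if_pos hm, dif_pos]

theorem X_inl_eq_reE {S : Finset ℕ} (e : EIdx S) :
    (X (Sum.inl e) : RRing R S) = reE R S e.1 (S \ e.1) := by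
  rw [reE_eq_X R ⟨disjoint_sdiff, union_sdiff_of_subset e.2.1⟩
    (by rw [← inf_eq_left, ← min_union, union_sdiff_of_subset e.2.1, e.2.2])]

theorem validD_of_subset {S I' J' : Finset ℕ} (hI' : I' ⊆ S) (hJ' : J' ⊆ S \ I')
    (hc : 1 ≤ I'.card) (hc' : 2 ≤ (S \ I').card) : validD S I' J' ((S \ I') \ J') := by
  refine ⟨?_, disjoint_sdiff, ?_, hc, ?_⟩ <;> rw [union_sdiff_of_subset hJ']
  exacts [disjoint_sdiff, union_sdiff_of_subset hI', hc']

theorem validD_of_DIdx {S : Finset ℕ} (d : DIdx S) :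
    validD S d.1.1 d.1.2 ((S \ d.1.1) \ d.1.2) :=
  validD_of_subset d.2.1 d.2.2.1 d.2.2.2.1 d.2.2.2.2.1

theorem validD_unique {S C C' A B : Finset ℕ} (h : validD S C A B) (h' : validD S C' A B) :
    C = C' := by
  rw [← union_sdiff_cancel_right h.1, h.2.2.1, ← h'.2.2.1, union_sdiff_cancel_right h'.1]

theorem X_inr_eq_reD {S : Finset ℕ} (d : DIdx S) :
    (X (Sum.inr d) : RRing R S) = reD R S d.1.1 d.1.2 ((S \ d.1.1) \ d.1.2) := by
  rw [reD_eq_X R (validD_of_DIdx d)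
    (by rw [← inf_eq_left, ← min_union, union_sdiff_of_subset d.2.2.1, d.2.2.2.2.2])]

theorem reD_eq_zero_of_card {S C A B : Finset ℕ} (h : ¬ (1 ≤ C.card ∧ 2 ≤ (S \ C).card)) :
    reD R S C A B = 0 := by
  unfold reD reXd
  split_ifs <;> tauto

theorem epsm_mul_self (A B : Finset ℕ) : epsm A B * epsm A B = 1 := by
  unfold epsm; split_ifs <;> rfl

theorem epsm_smul_epsm_smul {M : Type*} [AddCommGroup M] (A B : Finset ℕ) (x : M) :
    epsm A B • epsm A B • x = x := by
  rw [smul_smul, epsm_mul_self, one_smul]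

theorem min_insert_of_mem_le {A : Finset ℕ} {a n : ℕ} (ha : a ∈ A) (han : a ≤ n) :
    (insert n A).min = A.min := by
  rw [min_insert, min_eq_right ((min_le ha).trans (WithTop.coe_le_coe.2 han))]

theorem epsm_insert_left {A B : Finset ℕ} {a n : ℕ} (ha : a ∈ A) (han : a ≤ n) :
    epsm (insert n A) B = epsm A B := by
  rw [epsm, epsm, min_insert_of_mem_le ha han]

theorem epsm_insert_right {A B : Finset ℕ} {a n : ℕ} (ha : a ∈ A) (han : a ≤ n) :
    epsm A (insert n B) = epsm A B := by
  simp only [epsm, min_insert, le_min_iff, (min_le ha).trans (WithTop.coe_le_coe.2 han), true_and]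

theorem union_inter_eq_of_subset {I J K A : Finset ℕ} (hA : A ⊆ I ∪ (J ∪ K)) (hJA : J ⊆ A)
    (hAK : Disjoint A K) : J ∪ A ∩ I = A := by
  simp only [Finset.ext_iff, Finset.subset_iff, Finset.disjoint_left, mem_union, mem_inter] at *
  grind

end Variables

section Extension

variable (R : Type) [CommRing R] (ℓ : ℕ)

theorem Iset_succ : Iset (ℓ + 1) = insert (ℓ + 1) (Iset ℓ) := by
  ext x; simp only [Iset, mem_Icc, mem_insert]; omega

theorem succ_notMem_Iset : ℓ + 1 ∉ Iset ℓ := by simp [Iset]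

theorem le_of_mem_Iset {x : ℕ} (hx : x ∈ Iset ℓ) : x ≤ ℓ + 1 := by
  simp only [Iset, mem_Icc] at hx; omega

theorem union_succ_inter_Iset {A : Finset ℕ} (hA : A ⊆ Iset ℓ) : (A ∪ {ℓ + 1}) ∩ Iset ℓ = A := by
  rw [union_inter_distrib_right, inter_eq_left.2 hA,
    disjoint_iff_inter_eq_empty.1 (disjoint_singleton_left.2 (succ_notMem_Iset ℓ)), union_empty]

theorem validE_union_succ_left {A B : Finset ℕ} (h : validE (Iset ℓ) A B) :
    validE (Iset (ℓ + 1)) (A ∪ {ℓ + 1}) B := by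
  have hB : ℓ + 1 ∉ B := fun hn => succ_notMem_Iset ℓ (h.2 ▸ mem_union_right A hn)
  refine ⟨disjoint_union_left.2 ⟨h.1, disjoint_singleton_left.2 hB⟩, ?_⟩
  rw [union_right_comm, h.2, union_singleton, Iset_succ]

theorem validE_union_succ_right {A B : Finset ℕ} (h : validE (Iset ℓ) A B) :
    validE (Iset (ℓ + 1)) A (B ∪ {ℓ + 1}) := by
  have h' := validE_union_succ_left ℓ (A := B) (B := A) ⟨h.1.symm, union_comm A B ▸ h.2⟩
  exact ⟨h'.1.symm, union_comm A _ ▸ h'.2⟩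

theorem validD_union_succ_left {C A B : Finset ℕ} (h : validD (Iset ℓ) C A B) :
    validD (Iset (ℓ + 1)) (C ∪ {ℓ + 1}) A B := by
  obtain ⟨h1, h2, h3, -, h5⟩ := h
  have hAB : ℓ + 1 ∉ A ∪ B := fun hn => succ_notMem_Iset ℓ (h3 ▸ mem_union_right C hn)
  refine ⟨disjoint_union_left.2 ⟨h1, disjoint_singleton_left.2 hAB⟩, h2, ?_, ?_, h5⟩
  · rw [union_right_comm, h3, union_singleton, Iset_succ]
  · exact card_pos.2 ⟨ℓ + 1, mem_union_right C (mem_singleton_self _)⟩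

theorem validD_union_succ_mid {C A B : Finset ℕ} (h : validD (Iset ℓ) C A B) :
    validD (Iset (ℓ + 1)) C (A ∪ {ℓ + 1}) B := by
  obtain ⟨h1, h2, h3, h4, h5⟩ := h
  have hC : ℓ + 1 ∉ C := fun hn => succ_notMem_Iset ℓ (h3 ▸ mem_union_left _ hn)
  have hB : ℓ + 1 ∉ B := fun hn =>
    succ_notMem_Iset ℓ (h3 ▸ mem_union_right C (mem_union_right A hn))
  have hre : A ∪ {ℓ + 1} ∪ B = A ∪ B ∪ {ℓ + 1} := union_right_comm _ _ _
  refine ⟨?_, disjoint_union_left.2 ⟨h2, disjoint_singleton_left.2 hB⟩, ?_, h4, ?_⟩ <;>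
    rw [hre]
  · exact disjoint_union_right.2 ⟨h1, disjoint_singleton_right.2 hC⟩
  · rw [← union_assoc, h3, union_singleton, Iset_succ]
  · exact h5.trans (card_le_card subset_union_left)

theorem validD_union_succ_right {C A B : Finset ℕ} (h : validD (Iset ℓ) C A B) :
    validD (Iset (ℓ + 1)) C A (B ∪ {ℓ + 1}) :=
  validD_swap (validD_union_succ_mid ℓ (validD_swap h))

theorem Fre_X_inl (e : EIdx (Iset ℓ)) :
    Fre R ℓ (X (Sum.inl e)) =
      reE R (Iset (ℓ + 1)) (e.1 ∪ {ℓ + 1}) (Iset ℓ \ e.1)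
      + reE R (Iset (ℓ + 1)) e.1 ((Iset ℓ \ e.1) ∪ {ℓ + 1}) := by
  simp [Fre]

theorem Fre_reD {C A B : Finset ℕ} (h : validD (Iset ℓ) C A B) :
    Fre R ℓ (reD R (Iset ℓ) C A B) =
      reD R (Iset (ℓ + 1)) (C ∪ {ℓ + 1}) A B + reD R (Iset (ℓ + 1)) C (A ∪ {ℓ + 1}) B
      + reD R (Iset (ℓ + 1)) C A (B ∪ {ℓ + 1}) := by
  wlog hm : A.min ≤ B.min generalizing A B
  · rw [reD_symm, this (validD_swap h) (le_of_not_ge hm), reD_symm R _ _ B,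
      reD_symm R _ _ (B ∪ _), reD_symm R _ _ B (A ∪ _)]
    abel
  rw [reD_eq_X R h hm]
  simp only [Fre, aeval_X]
  rw [sdiff_sdiff_eq_of_validD h]

end Extension

section Relations

variable (R : Type) [CommRing R]

def relTerm (S : Finset ℕ) (u : ℕ) (V W I' J' : Finset ℕ) : RRing R S :=
  if u ∈ I' ∧ V ⊆ J' ∧ W ⊆ (S \ I') \ J' then
    epsm J' ((S \ I') \ J') • reD R S I' J' ((S \ I') \ J')
  else 0

def relSum (S : Finset ℕ) (u : ℕ) (V W : Finset ℕ) : RRing R S :=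
  ∑ I' ∈ S.powerset, ∑ J' ∈ (S \ I').powerset, relTerm R S u V W I' J'

theorem ite_card_and_smul_reD (S I' J' K' : Finset ℕ) (z : ℤ) (P : Prop) [Decidable P] :
    (if 1 ≤ I'.card ∧ 2 ≤ (S \ I').card ∧ P then z • reD R S I' J' K' else 0) =
      if P then z • reD R S I' J' K' else 0 := by
  by_cases hc : 1 ≤ I'.card ∧ 2 ≤ (S \ I').card
  · simp only [hc, true_and]
  · rw [reD_eq_zero_of_card R hc, smul_zero, ite_self, ite_self]

theorem relE_eq_relSum (S : Finset ℕ) (a b c : ℕ) :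
    relE R S a b c = relSum R S c {a, b} ∅ - relSum R S b {a, c} ∅ - relSum R S a {b} {c} := by
  simp only [relE, relSum, relTerm, ite_card_and_smul_reD]
  congr 1; congr 1
  all_goals refine sum_congr rfl fun _ _ => sum_congr rfl fun _ _ => if_congr ?_ rfl rfl
  · simp only [insert_subset_iff, singleton_subset_iff, empty_subset, and_true]; tauto
  · simp only [insert_subset_iff, singleton_subset_iff, empty_subset, and_true]; tauto
  · simp only [singleton_subset_iff]

def relETerm (S : Finset ℕ) (a b c : ℕ) (I' J' : Finset ℕ) : RRing R S :=
  relTerm R S c {a, b} ∅ I' J' - relTerm R S b {a, c} ∅ I' J' - relTerm R S a {b} {c} I' J'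

theorem relE_eq_sum_relETerm (S : Finset ℕ) (a b c : ℕ) :
    relE R S a b c = ∑ I' ∈ S.powerset, ∑ J' ∈ (S \ I').powerset, relETerm R S a b c I' J' := by
  simp only [relE_eq_relSum, relSum, relETerm, sum_sub_distrib]

theorem Fre_relTerm (ℓ : ℕ) {u : ℕ} {V W I' J' : Finset ℕ} (hu : u ∈ Iset ℓ) (hV : V ⊆ Iset ℓ)
    (hW : W ⊆ Iset ℓ) (hVne : V.Nonempty) (hVW : 2 ≤ (V ∪ W).card) (hI' : I' ⊆ Iset ℓ)
    (hJ' : J' ⊆ Iset ℓ \ I') :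
    Fre R ℓ (relTerm R (Iset ℓ) u V W I' J') =
      relTerm R (Iset (ℓ + 1)) u V W (insert (ℓ + 1) I') J'
      + relTerm R (Iset (ℓ + 1)) u V W I' (insert (ℓ + 1) J')
      + relTerm R (Iset (ℓ + 1)) u V W I' J' := by
  have hn := succ_notMem_Iset ℓ
  have hnI' : ℓ + 1 ∉ I' := fun h => hn (hI' h)
  have hnJ' : ℓ + 1 ∉ J' := fun h => hn (mem_sdiff.1 (hJ' h)).1
  have e1 : Iset (ℓ + 1) \ insert (ℓ + 1) I' = Iset ℓ \ I' := by
    rw [Iset_succ, insert_sdiff_insert, sdiff_insert_of_notMem hn]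
  have e2 : (Iset (ℓ + 1) \ I') \ insert (ℓ + 1) J' = (Iset ℓ \ I') \ J' := by
    rw [Iset_succ, insert_sdiff_of_notMem _ hnI', insert_sdiff_insert,
      sdiff_insert_of_notMem (fun h => hn (mem_sdiff.1 h).1)]
  have e3 : (Iset (ℓ + 1) \ I') \ J' = insert (ℓ + 1) ((Iset ℓ \ I') \ J') := by
    rw [Iset_succ, insert_sdiff_of_notMem _ hnI', insert_sdiff_of_notMem _ hnJ']
  have hu' : u ≠ ℓ + 1 := fun h => hn (h ▸ hu)
  simp only [relTerm, e1, e2, e3, mem_insert, hu', false_or,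
    subset_insert_iff_of_notMem (fun h => hn (hV h)),
    subset_insert_iff_of_notMem (fun h => hn (hW h))]
  split_ifs with hP
  · obtain ⟨huI', hVJ', hWK'⟩ := hP
    obtain ⟨v, hv⟩ := hVne
    have hvalid := validD_of_subset hI' hJ' (card_pos.2 ⟨u, huI'⟩) (hVW.trans (card_le_card
      (union_subset (hVJ'.trans hJ') (hWK'.trans sdiff_subset))))
    rw [map_zsmul, Fre_reD R ℓ hvalid, epsm_insert_left (hVJ' hv) (le_of_mem_Iset ℓ (hV hv)),
      epsm_insert_right (hVJ' hv) (le_of_mem_Iset ℓ (hV hv))]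
    simp only [union_singleton, smul_add]
  · simp

theorem Fre_relSum (ℓ : ℕ) {u : ℕ} {V W : Finset ℕ} (hu : u ∈ Iset ℓ) (hV : V ⊆ Iset ℓ)
    (hW : W ⊆ Iset ℓ) (hVne : V.Nonempty) (hVW : 2 ≤ (V ∪ W).card) :
    Fre R ℓ (relSum R (Iset ℓ) u V W) = relSum R (Iset (ℓ + 1)) u V W := by
  have hn := succ_notMem_Iset ℓ
  rw [relSum, relSum, show (Iset (ℓ + 1)).powerset = (insert (ℓ + 1) (Iset ℓ)).powerset by
    rw [Iset_succ], sum_powerset_insert hn, map_sum, ← sum_add_distrib]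
  refine sum_congr rfl fun I' hI' => ?_
  have hI'S := mem_powerset.1 hI'
  have e1 : Iset (ℓ + 1) \ insert (ℓ + 1) I' = Iset ℓ \ I' := by
    rw [Iset_succ, insert_sdiff_insert, sdiff_insert_of_notMem hn]
  have e2 : Iset (ℓ + 1) \ I' = insert (ℓ + 1) (Iset ℓ \ I') := by
    rw [Iset_succ, insert_sdiff_of_notMem _ (fun h => hn (hI'S h))]
  rw [e1, e2, sum_powerset_insert (fun h => hn (mem_sdiff.1 h).1), map_sum,
    ← sum_add_distrib, ← sum_add_distrib]
  refine sum_congr rfl fun J' hJ' => ?_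
  rw [Fre_relTerm R ℓ hu hV hW hVne hVW hI'S (mem_powerset.1 hJ')]
  abel

theorem Fre_relE (ℓ : ℕ) {a b c : ℕ} (ha : a ∈ Iset ℓ) (hb : b ∈ Iset ℓ) (hc : c ∈ Iset ℓ)
    (hab : a ≠ b) (hac : a ≠ c) (hbc : b ≠ c) :
    Fre R ℓ (relE R (Iset ℓ) a b c) = relE R (Iset (ℓ + 1)) a b c := by
  rw [relE_eq_relSum, relE_eq_relSum, map_sub, map_sub,
    Fre_relSum R ℓ hc (by simp [insert_subset_iff, ha, hb]) (empty_subset _) (insert_nonempty _ _)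
      (by simp [hab]),
    Fre_relSum R ℓ hb (by simp [insert_subset_iff, ha, hc]) (empty_subset _) (insert_nonempty _ _)
      (by simp [hac]),
    Fre_relSum R ℓ ha (by simp [hb]) (by simp [hc]) (singleton_nonempty _) (by simp [hbc])]

theorem relE_mem_reIdeal {S : Finset ℕ} {a b c : ℕ} (ha : a ∈ S) (hb : b ∈ S) (hc : c ∈ S)
    (hab : a ≠ b) (hac : a ≠ c) (hbc : b ≠ c) : relE R S a b c ∈ reIdeal R S :=
  Ideal.subset_span (Set.mem_union_right _ ⟨a, b, c, ha, hb, hc, hab, hac, hbc, rfl⟩)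

end Relations

section Images

variable (R : Type) [CommRing R] {ℓ : ℕ} {I J K : Finset ℕ}

theorem ndOf_notMem (I : Finset ℕ) : ndOf I ∉ I := by
  refine (Nat.sInf_mem (s := {n | 0 < n ∧ n ∉ I}) ⟨I.sup id + 1, Nat.succ_pos _, fun h => ?_⟩).2
  exact Nat.not_succ_le_self _ (le_sup (f := id) h)

theorem F1IJK_mem_range (x : RRing R (insert (ndOf I) I)) :
    F1IJK R ℓ I J K x ∈ (FIJK R ℓ I J K).range :=
  ⟨x ⊗ₜ 1, by simp [FIJK]⟩

theorem F2IJK_mem_range (y : CxRing R (insert 0 (J ∪ K))) :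
    F2IJK R ℓ I J K y ∈ (FIJK R ℓ I J K).range :=
  ⟨1 ⊗ₜ y, by simp [FIJK]⟩

theorem F1IJK_reE {P Q : Finset ℕ} (h : validE (insert (ndOf I) I) P Q) (hnd : ndOf I ∈ P) :
    F1IJK R ℓ I J K (reE R (insert (ndOf I) I) P Q) =
      reE R (Iset ℓ) (J ∪ P.erase (ndOf I)) (K ∪ Q) := by
  rcases le_total P.min Q.min with hm | hm
  · rw [reE_eq_X R h hm]
    simp only [F1IJK, aeval_X]
    rw [if_pos hnd, ← h.2, union_sdiff_cancel_left h.1]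
  · rw [reE_symm, reE_eq_X R ⟨h.1.symm, union_comm P Q ▸ h.2⟩ hm]
    simp only [F1IJK, aeval_X]
    rw [if_neg (disjoint_left.1 h.1 hnd), ← h.2, union_sdiff_cancel_right h.1]

theorem F1IJK_reD_left {C A B : Finset ℕ} (h : validD (insert (ndOf I) I) C A B)
    (hnd : ndOf I ∈ C) :
    F1IJK R ℓ I J K (reD R (insert (ndOf I) I) C A B) =
      reD R (Iset ℓ) (C.erase (ndOf I) ∪ J ∪ K) A B := by
  wlog hm : A.min ≤ B.min generalizing A B
  · rw [reD_symm, this (validD_swap h) (le_of_not_ge hm), reD_symm]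
  rw [reD_eq_X R h hm]
  simp only [F1IJK, aeval_X]
  rw [if_pos hnd, sdiff_sdiff_eq_of_validD h]

theorem F1IJK_reD_mid {C A B : Finset ℕ} (h : validD (insert (ndOf I) I) C A B)
    (hnd : ndOf I ∈ A) :
    F1IJK R ℓ I J K (reD R (insert (ndOf I) I) C A B) =
      reD R (Iset ℓ) C (J ∪ A.erase (ndOf I)) (K ∪ B) := by
  have hC : ndOf I ∉ C := fun h' => disjoint_left.1 h.1 h' (mem_union_left B hnd)
  rcases le_total A.min B.min with hm | hm
  · rw [reD_eq_X R h hm]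
    simp only [F1IJK, aeval_X]
    rw [if_neg hC, if_pos hnd, sdiff_sdiff_eq_of_validD h]
  · rw [reD_symm, reD_eq_X R (validD_swap h) hm]
    simp only [F1IJK, aeval_X]
    rw [if_neg hC, if_neg (disjoint_left.1 h.2.1 hnd), sdiff_sdiff_eq_of_validD (validD_swap h)]

theorem reE_mem_range (hIJK : validD (Iset ℓ) I J K) {A B : Finset ℕ}
    (h : validE (Iset ℓ) A B) (hp : preceq J K A B) :
    reE R (Iset ℓ) A B ∈ (FIJK R ℓ I J K).range := by
  wlog hJK : J ⊆ A ∧ K ⊆ B generalizing A B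
  · rw [reE_symm]
    exact this ⟨h.1.symm, union_comm A B ▸ h.2⟩ hp.symm (hp.resolve_left hJK)
  obtain ⟨hd1, hd2, hU, -, -⟩ := hIJK
  obtain ⟨hAB, hABS⟩ := h
  obtain ⟨hJA, hKB⟩ := hJK
  have hnd := ndOf_notMem I
  have hval : validE (insert (ndOf I) I) (insert (ndOf I) (A ∩ I)) (B ∩ I) := by
    simp only [validE, Finset.ext_iff, Finset.subset_iff, Finset.disjoint_left, mem_union,
      mem_inter, mem_insert] at *
    grind
  have hA : J ∪ A ∩ I = A := union_inter_eq_of_subset (hU ▸ hABS ▸ subset_union_left) hJA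
    (disjoint_of_subset_right hKB hAB)
  have hB : K ∪ B ∩ I = B := union_inter_eq_of_subset (union_comm J K ▸ hU ▸ hABS ▸
    subset_union_right) hKB (disjoint_of_subset_right hJA hAB.symm)
  have key := F1IJK_reE R (ℓ := ℓ) (J := J) (K := K) hval (mem_insert_self _ _)
  rw [erase_insert (fun h => hnd (mem_inter.1 h).2), hA, hB] at key
  exact key ▸ F1IJK_mem_range R _

theorem reD_mem_range_of_subset (hIJK : validD (Iset ℓ) I J K) {C A B : Finset ℕ}
    (h : validD (Iset ℓ) C A B) (hJKC : J ∪ K ⊆ C) :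
    reD R (Iset ℓ) C A B ∈ (FIJK R ℓ I J K).range := by
  obtain ⟨hd1, hd2, hU, -, -⟩ := hIJK
  obtain ⟨h1, h2, h3, -, h5⟩ := h
  have hnd := ndOf_notMem I
  have hval : validD (insert (ndOf I) I) (insert (ndOf I) (C ∩ I)) A B := by
    refine ⟨?_, h2, ?_, card_pos.2 (insert_nonempty _ _), h5⟩ <;>
    · simp only [Finset.ext_iff, Finset.subset_iff, Finset.disjoint_left, mem_union, mem_inter,
        mem_insert] at *
      grind
  have hC : C ∩ I ∪ J ∪ K = C := by
    simp only [Finset.ext_iff, Finset.subset_iff, Finset.disjoint_left, mem_union, mem_inter] at *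
    grind
  have key := F1IJK_reD_left R (ℓ := ℓ) (J := J) (K := K) hval (mem_insert_self _ _)
  rw [erase_insert (fun h => hnd (mem_inter.1 h).2), hC] at key
  exact key ▸ F1IJK_mem_range R _

theorem reD_mem_range_of_preceq_left (hIJK : validD (Iset ℓ) I J K) {C A B : Finset ℕ}
    (h : validD (Iset ℓ) C A B) (hp : preceq J K A B)
    (hc : ¬ ((A = J ∧ B = K) ∨ (A = K ∧ B = J))) :
    reD R (Iset ℓ) C A B ∈ (FIJK R ℓ I J K).range := by
  wlog hJK : J ⊆ A ∧ K ⊆ B generalizing A B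
  · rw [reD_symm]
    exact this (validD_swap h) hp.symm (by tauto) (hp.resolve_left hJK)
  obtain ⟨hd1, hd2, hU, -, -⟩ := hIJK
  obtain ⟨h1, h2, h3, h4, -⟩ := h
  obtain ⟨hJA, hKB⟩ := hJK
  have hnd := ndOf_notMem I
  have hA : J ∪ A ∩ I = A := union_inter_eq_of_subset
    (hU ▸ h3 ▸ subset_union_left.trans subset_union_right) hJA (disjoint_of_subset_right hKB h2)
  have hB : K ∪ B ∩ I = B := union_inter_eq_of_subset
    (union_comm J K ▸ hU ▸ h3 ▸ subset_union_right.trans subset_union_right) hKB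
    (disjoint_of_subset_right hJA h2.symm)
  have hne : (A ∩ I ∪ B ∩ I).Nonempty := by
    rw [nonempty_iff_ne_empty, Ne, union_eq_empty]
    rintro ⟨hAI, hBI⟩
    exact hc (Or.inl ⟨by rw [← hA, hAI, union_empty], by rw [← hB, hBI, union_empty]⟩)
  have hcard : 2 ≤ (insert (ndOf I) (A ∩ I) ∪ B ∩ I).card := by
    rw [insert_union, card_insert_of_notMem (by simp [hnd])]
    exact Nat.succ_le_succ (card_pos.2 hne)
  have hval : validD (insert (ndOf I) I) C (insert (ndOf I) (A ∩ I)) (B ∩ I) := by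
    refine ⟨?_, ?_, ?_, h4, hcard⟩ <;>
    · simp only [Finset.ext_iff, Finset.subset_iff, Finset.disjoint_left, mem_union, mem_inter,
        mem_insert] at *
      grind
  have key := F1IJK_reD_mid R (ℓ := ℓ) (J := J) (K := K) hval (mem_insert_self _ _)
  rw [erase_insert (fun h => hnd (mem_inter.1 h).2), hA, hB] at key
  exact key ▸ F1IJK_mem_range R _

theorem min_insert_zero (T : Finset ℕ) : (insert 0 T).min = ((0 : ℕ) : WithTop ℕ) :=
  le_antisymm (min_le (mem_insert_self _ _))
    (Finset.le_min fun a _ => WithTop.coe_le_coe.2 (Nat.zero_le a))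

theorem reD_mem_range_of_preceq_right (hIJK : validD (Iset ℓ) I J K) {C A B : Finset ℕ}
    (h : validD (Iset ℓ) C A B) (hp : preceq A B J K)
    (hc : ¬ ((A = J ∧ B = K) ∨ (A = K ∧ B = J))) :
    reD R (Iset ℓ) C A B ∈ (FIJK R ℓ I J K).range := by
  wlog hJK : A ⊆ J ∧ B ⊆ K generalizing A B
  · rw [reD_symm]
    exact this (validD_swap h) (by tauto) (by tauto) (hp.resolve_left hJK).symm
  obtain ⟨hd1, hd2, hU, -, -⟩ := hIJK
  obtain ⟨h1, h2, h3, -, h5⟩ := h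
  obtain ⟨hAJ, hBK⟩ := hJK
  set Z := (J ∪ K) \ (A ∪ B)
  have h0 : 0 ∉ J ∪ K := fun h0 => by
    simpa [Iset] using (hU ▸ mem_union_right I h0 : 0 ∈ Iset ℓ)
  have h0Z : 0 ∉ Z := fun h0Z => h0 (mem_sdiff.1 h0Z).1
  have hZ : Z.Nonempty := by
    rw [nonempty_iff_ne_empty]
    intro hemp
    refine hc (Or.inl ⟨?_, ?_⟩) <;>
    · simp only [Z, Finset.ext_iff, Finset.subset_iff, Finset.disjoint_left, mem_union,
        mem_sdiff, notMem_empty] at *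
      grind
  have hAB : insert 0 (J ∪ K) \ insert 0 Z = A ∪ B := by
    rw [insert_sdiff_insert, sdiff_insert_of_notMem h0, Finset.sdiff_sdiff_eq_self
      (union_subset_union hAJ hBK)]
  have hA : J ∩ (A ∪ B) = A := by
    simp only [Finset.ext_iff, Finset.subset_iff, Finset.disjoint_left, mem_union, mem_inter] at *
    grind
  have hB : K ∩ (A ∪ B) = B := by
    simp only [Finset.ext_iff, Finset.subset_iff, Finset.disjoint_left, mem_union, mem_inter] at *
    grind
  have hC : I ∪ Z = C := by
    simp only [Z, Finset.ext_iff, Finset.subset_iff, Finset.disjoint_left, mem_union, mem_inter,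
      mem_sdiff] at *
    grind
  let j : CxIdx (insert 0 (J ∪ K)) :=
    ⟨insert 0 Z, insert_subset_insert 0 sdiff_subset,
      by rw [card_insert_of_notMem h0Z]; exact Nat.succ_le_succ (card_pos.2 hZ),
      by rw [hAB]; exact h5, by rw [min_insert_zero, min_insert_zero]⟩
  set σ : ℤ := (-1) ^ K.card * epsm A B
  have key : F2IJK R ℓ I J K (X j) = σ • reD R (Iset ℓ) C A B := by
    simp only [F2IJK, aeval_X, j]
    rw [hAB, erase_insert h0Z, hA, hB, hC]
  have hσ : σ * σ = 1 := by
    rw [mul_mul_mul_comm, ← pow_add, ← two_mul, pow_mul, neg_one_sq, one_pow, one_mul,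
      epsm_mul_self]
  have hmem := F2IJK_mem_range R (ℓ := ℓ) (I := I) (σ • X j)
  rwa [map_zsmul, key, smul_smul, hσ, one_smul] at hmem

end Images

section Liftable

variable (R : Type) [CommRing R] {ℓ : ℕ} {I J K Is Js Ks : Finset ℕ}

theorem not_preceq_of_inter (S : Finset ℕ) {J K A B : Finset ℕ}
    (h : ¬ preceq (J ∩ S) (K ∩ S) (A ∩ S) (B ∩ S)) : ¬ preceq J K A B := by
  rintro (⟨h1, h2⟩ | ⟨h1, h2⟩)
  exacts [h (Or.inl ⟨inter_subset_inter h1 subset_rfl, inter_subset_inter h2 subset_rfl⟩),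
    h (Or.inr ⟨inter_subset_inter h1 subset_rfl, inter_subset_inter h2 subset_rfl⟩)]

def IsLiftD (ℓ : ℕ) (J K Is Js Ks : Finset ℕ) : Prop :=
  validD (Iset (ℓ + 1)) Is Js Ks ∧ Js ∩ Iset ℓ = J ∧ Ks ∩ Iset ℓ = K

theorem reD_mul_reE_mem_reIdeal (hD : IsLiftD ℓ J K Is Js Ks) {P Q A B : Finset ℕ}
    (hPQ : validE (Iset (ℓ + 1)) P Q) (hP : P ∩ Iset ℓ = A) (hQ : Q ∩ Iset ℓ = B)
    (hJK : ¬ preceq J K A B) :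
    reD R (Iset (ℓ + 1)) Is Js Ks * reE R (Iset (ℓ + 1)) P Q ∈ reIdeal R (Iset (ℓ + 1)) := by
  obtain ⟨hD, rfl, rfl⟩ := hD
  subst hP hQ
  rw [mul_comm]
  exact Ideal.subset_span (Or.inl (Or.inl (Or.inl (Or.inr
    ⟨P, Q, Is, Js, Ks, hPQ, hD, not_preceq_of_inter _ hJK, rfl⟩))))

theorem reD_mul_reD_mem_reIdeal (hD : IsLiftD ℓ J K Is Js Ks) {C' A' B' C A B : Finset ℕ}
    (h : validD (Iset (ℓ + 1)) C' A' B') (hC : C' ∩ Iset ℓ = C) (hA : A' ∩ Iset ℓ = A)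
    (hB : B' ∩ Iset ℓ = B) (h1 : ¬ preceq J K A B) (h2 : ¬ preceq A B J K)
    (h3 : ¬ J ∪ K ⊆ C) :
    reD R (Iset (ℓ + 1)) Is Js Ks * reD R (Iset (ℓ + 1)) C' A' B' ∈ reIdeal R (Iset (ℓ + 1)) := by
  obtain ⟨hD, rfl, rfl⟩ := hD
  subst hC hA hB
  refine Ideal.subset_span (Or.inl (Or.inl (Or.inr ⟨Is, Js, Ks, C', A', B', hD, h,
    not_preceq_of_inter _ h1, not_preceq_of_inter _ h2, fun h' => h3 ?_, rfl⟩)))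
  rw [← union_inter_distrib_right]
  exact inter_subset_inter h' subset_rfl

variable (ℓ I J K) in
abbrev liftable (D : RRing R (Iset (ℓ + 1))) : Subalgebra R (RRing R (Iset ℓ)) :=
  (Fre R ℓ).liftableSubalgebra (FIJK R ℓ I J K) D (reIdeal R (Iset (ℓ + 1)))

theorem X_inl_mem_liftable (hIJK : validD (Iset ℓ) I J K) (hD : IsLiftD ℓ J K Is Js Ks)
    (e : EIdx (Iset ℓ)) :
    X (Sum.inl e) ∈ liftable R ℓ I J K (reD R (Iset (ℓ + 1)) Is Js Ks) := by
  have he : validE (Iset ℓ) e.1 (Iset ℓ \ e.1) := ⟨disjoint_sdiff, union_sdiff_of_subset e.2.1⟩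
  by_cases hp : preceq J K e.1 (Iset ℓ \ e.1)
  · exact AlgHom.range_le_liftableSubalgebra (X_inl_eq_reE R e ▸ reE_mem_range R hIJK he hp)
  apply AlgHom.mem_liftableSubalgebra_of_mul_mem
  rw [Fre_X_inl, mul_add]
  exact add_mem
    (reD_mul_reE_mem_reIdeal R hD (validE_union_succ_left ℓ he) (union_succ_inter_Iset ℓ e.2.1)
      (inter_eq_left.2 sdiff_subset) hp)
    (reD_mul_reE_mem_reIdeal R hD (validE_union_succ_right ℓ he) (inter_eq_left.2 e.2.1)
      (union_succ_inter_Iset ℓ sdiff_subset) hp)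

theorem reD_mem_liftable_of_not_corner (hIJK : validD (Iset ℓ) I J K)
    (hD : IsLiftD ℓ J K Is Js Ks) {C A B : Finset ℕ} (h : validD (Iset ℓ) C A B)
    (hc : ¬ ((A = J ∧ B = K) ∨ (A = K ∧ B = J))) :
    reD R (Iset ℓ) C A B ∈ liftable R ℓ I J K (reD R (Iset (ℓ + 1)) Is Js Ks) := by
  by_cases h1 : J ∪ K ⊆ C
  · exact AlgHom.range_le_liftableSubalgebra (reD_mem_range_of_subset R hIJK h h1)
  by_cases h2 : preceq J K A B
  · exact AlgHom.range_le_liftableSubalgebra (reD_mem_range_of_preceq_left R hIJK h h2 hc)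
  by_cases h3 : preceq A B J K
  · exact AlgHom.range_le_liftableSubalgebra (reD_mem_range_of_preceq_right R hIJK h h3 hc)
  apply AlgHom.mem_liftableSubalgebra_of_mul_mem
  have hC : C ⊆ Iset ℓ := h.2.2.1 ▸ subset_union_left
  have hA : A ⊆ Iset ℓ := h.2.2.1 ▸ subset_union_left.trans subset_union_right
  have hB : B ⊆ Iset ℓ := h.2.2.1 ▸ subset_union_right.trans subset_union_right
  rw [Fre_reD R ℓ h, mul_add, mul_add]
  refine add_mem (add_mem ?_ ?_) ?_
  · exact reD_mul_reD_mem_reIdeal R hD (validD_union_succ_left ℓ h) (union_succ_inter_Iset ℓ hC)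
      (inter_eq_left.2 hA) (inter_eq_left.2 hB) h2 h3 h1
  · exact reD_mul_reD_mem_reIdeal R hD (validD_union_succ_mid ℓ h) (inter_eq_left.2 hC)
      (union_succ_inter_Iset ℓ hA) (inter_eq_left.2 hB) h2 h3 h1
  · exact reD_mul_reD_mem_reIdeal R hD (validD_union_succ_right ℓ h) (inter_eq_left.2 hC)
      (inter_eq_left.2 hA) (union_succ_inter_Iset ℓ hB) h2 h3 h1

theorem relE_mem_liftable {D : RRing R (Iset (ℓ + 1))} {a b c : ℕ} (ha : a ∈ Iset ℓ)
    (hb : b ∈ Iset ℓ) (hc : c ∈ Iset ℓ) (hab : a ≠ b) (hac : a ≠ c) (hbc : b ≠ c) :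
    relE R (Iset ℓ) a b c ∈ liftable R ℓ I J K D := by
  apply AlgHom.mem_liftableSubalgebra_of_mul_mem
  rw [Fre_relE R ℓ ha hb hc hab hac hbc]
  have hsub : Iset ℓ ⊆ Iset (ℓ + 1) := Iset_succ ℓ ▸ subset_insert _ _
  exact Ideal.mul_mem_left _ _ (relE_mem_reIdeal R (hsub ha) (hsub hb) (hsub hc) hab hac hbc)

theorem relTerm_mem_liftable (hIJK : validD (Iset ℓ) I J K) (hD : IsLiftD ℓ J K Is Js Ks)
    {u v : ℕ} {V W I' J' : Finset ℕ} (hI' : I' ⊆ Iset ℓ) (hJ' : J' ⊆ Iset ℓ \ I') (hv : v ∈ V)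
    (hvK : v ∉ K) (hne : (I', J') ≠ (I, J)) :
    relTerm R (Iset ℓ) u V W I' J' ∈ liftable R ℓ I J K (reD R (Iset (ℓ + 1)) Is Js Ks) := by
  unfold relTerm
  split_ifs with hP
  · refine zsmul_mem ?_ _
    by_cases hc : 1 ≤ I'.card ∧ 2 ≤ (Iset ℓ \ I').card
    · have hvalid := validD_of_subset hI' hJ' hc.1 hc.2
      refine reD_mem_liftable_of_not_corner R hIJK hD hvalid ?_
      rintro (⟨rfl, hK⟩ | ⟨rfl, -⟩)
      · rw [hK] at hvalid
        exact hne (by rw [validD_unique hvalid hIJK])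
      · exact hvK (hP.2.1 hv)
    · rw [reD_eq_zero_of_card R hc]
      exact zero_mem _
  · exact zero_mem _

theorem relETerm_mem_liftable (hIJK : validD (Iset ℓ) I J K) (hD : IsLiftD ℓ J K Is Js Ks)
    {x y z : ℕ} (hx : x ∈ Iset ℓ) (hy : y ∈ Iset ℓ) (hz : z ∈ Iset ℓ) (hxy : x ≠ y)
    (hxz : x ≠ z) (hyz : y ≠ z) (hxK : x ∉ K) (hyK : y ∉ K) :
    relETerm R (Iset ℓ) x y z I J ∈ liftable R ℓ I J K (reD R (Iset (ℓ + 1)) Is Js Ks) := by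
  have hT : ∀ I' ∈ (Iset ℓ).powerset, ∀ J' ∈ (Iset ℓ \ I').powerset, (I', J') ≠ (I, J) →
      relETerm R (Iset ℓ) x y z I' J' ∈ liftable R ℓ I J K (reD R (Iset (ℓ + 1)) Is Js Ks) := by
    intro I' hI' J' hJ' hne
    rw [mem_powerset] at hI' hJ'
    unfold relETerm
    exact sub_mem (sub_mem
      (relTerm_mem_liftable R hIJK hD hI' hJ' (mem_insert_self x {y}) hxK hne)
      (relTerm_mem_liftable R hIJK hD hI' hJ' (mem_insert_self x {z}) hxK hne))
      (relTerm_mem_liftable R hIJK hD hI' hJ' (mem_singleton_self y) hyK hne)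
  have hsum := relE_mem_liftable R (I := I) (J := J) (K := K)
    (D := reD R (Iset (ℓ + 1)) Is Js Ks) hx hy hz hxy hxz hyz
  rw [relE_eq_sum_relETerm] at hsum
  have hI : I ∈ (Iset ℓ).powerset := mem_powerset.2 (hIJK.2.2.1 ▸ subset_union_left)
  have hJ : J ∈ (Iset ℓ \ I).powerset := by
    rw [mem_powerset, sdiff_eq_of_validD hIJK]; exact subset_union_left
  refine mem_of_sum_mem_of_forall_ne (f := relETerm R (Iset ℓ) x y z I) hJ
    (mem_of_sum_mem_of_forall_ne (f := fun I' => ∑ J' ∈ (Iset ℓ \ I').powerset,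
      relETerm R (Iset ℓ) x y z I' J') hI hsum ?_) ?_
  · exact fun I' hI' hne => sum_mem fun J' hJ' => hT I' hI' J' hJ' (by simp [hne])
  · exact fun J' hJ' hne => hT I hI J' hJ' (by simp [hne])

end Liftable

section Main

variable (R : Type) [CommRing R] {ℓ : ℕ} {I J K Is Js Ks : Finset ℕ}

theorem relETerm_corner (hIJK : validD (Iset ℓ) I J K) (a b c : ℕ) :
    relETerm R (Iset ℓ) a b c I J =
      ((if c ∈ I ∧ a ∈ J ∧ b ∈ J then 1 else 0) - (if b ∈ I ∧ a ∈ J ∧ c ∈ J then 1 else 0)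
        - (if a ∈ I ∧ b ∈ J ∧ c ∈ K then 1 else 0) : ℤ) • epsm J K • reD R (Iset ℓ) I J K := by
  simp only [relETerm, relTerm, sdiff_sdiff_eq_of_validD hIJK, insert_subset_iff,
    singleton_subset_iff, empty_subset, and_true, sub_smul]
  split_ifs <;> simp

theorem reD_corner_mem_liftable (hIJK : validD (Iset ℓ) I J K) (hmin : J.min = (J ∪ K).min)
    (hD : IsLiftD ℓ J K Is Js Ks) :
    reD R (Iset ℓ) I J K ∈ liftable R ℓ I J K (reD R (Iset (ℓ + 1)) Is Js Ks) := by
  have ⟨hd1, hd2, hU, hIc, hJKc⟩ := hIJK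
  have hS : ∀ x ∈ I ∪ (J ∪ K), x ∈ Iset ℓ := fun x hx => hU ▸ hx
  have hε : epsm J K • reD R (Iset ℓ) I J K ∈
        liftable R ℓ I J K (reD R (Iset (ℓ + 1)) Is Js Ks) →
      reD R (Iset ℓ) I J K ∈ liftable R ℓ I J K (reD R (Iset (ℓ + 1)) Is Js Ks) := fun h => by
    simpa only [epsm_smul_epsm_smul] using zsmul_mem h (epsm J K)
  obtain ⟨a, ha⟩ := card_pos.1 hIc
  have hJ : J.Nonempty := by
    rw [nonempty_iff_ne_empty]
    rintro rfl
    rw [min_empty, eq_comm, Finset.min_eq_top] at hmin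
    rw [hmin, card_empty] at hJKc
    omega
  obtain ⟨b, hb⟩ := hJ
  have haJ : a ∉ J := fun h => disjoint_left.1 hd1 ha (mem_union_left K h)
  have haK : a ∉ K := fun h => disjoint_left.1 hd1 ha (mem_union_right J h)
  have hbI : b ∉ I := fun h => disjoint_left.1 hd1 h (mem_union_left K hb)
  have hbK : b ∉ K := disjoint_left.1 hd2 hb
  rcases K.eq_empty_or_nonempty with rfl | ⟨k, hk⟩
  · -- `ℝD_{I;J,∅}` occurs in `E_{b b' a}` only through its first sum
    rw [union_empty] at hJKc
    obtain ⟨b', hb', hb'b⟩ := exists_mem_ne hJKc b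
    have hb'I : b' ∉ I := fun h => disjoint_left.1 hd1 h (mem_union_left _ hb')
    have h := relETerm_mem_liftable R hIJK hD (x := b) (y := b') (z := a)
      (hS b (by simp [hb])) (hS b' (by simp [hb'])) (hS a (by simp [ha])) hb'b.symm
      (fun h => haJ (h ▸ hb)) (fun h => haJ (h ▸ hb')) (notMem_empty b) (notMem_empty b')
    rw [relETerm_corner R hIJK, if_pos ⟨ha, hb, hb'⟩, if_neg (fun h => hb'I h.1),
      if_neg (fun h => hbI h.1), sub_zero, sub_zero, one_smul] at h
    exact hε h
  · -- `ℝD_{I;J,K}` occurs in `E_{a b k}` only through its third sum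
    have hkI : k ∉ I := fun h => disjoint_left.1 hd1 h (mem_union_right _ hk)
    have h := relETerm_mem_liftable R hIJK hD (x := a) (y := b) (z := k)
      (hS a (by simp [ha])) (hS b (by simp [hb])) (hS k (by simp [hk]))
      (fun h => haJ (h ▸ hb)) (fun h => haK (h ▸ hk)) (fun h => hbK (h ▸ hk)) haK hbK
    rw [relETerm_corner R hIJK, if_neg (fun h => hkI h.1), if_neg (fun h => hbI h.1),
      if_pos ⟨ha, hb, hk⟩, sub_zero, zero_sub, neg_smul, one_smul, neg_mem_iff] at h
    exact hε h

theorem reD_mem_liftable (hIJK : validD (Iset ℓ) I J K) (hmin : J.min = (J ∪ K).min)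
    (hD : IsLiftD ℓ J K Is Js Ks) {C A B : Finset ℕ} (h : validD (Iset ℓ) C A B) :
    reD R (Iset ℓ) C A B ∈ liftable R ℓ I J K (reD R (Iset (ℓ + 1)) Is Js Ks) := by
  by_cases hc : (A = J ∧ B = K) ∨ (A = K ∧ B = J)
  · rcases hc with ⟨rfl, rfl⟩ | ⟨rfl, rfl⟩
    · rw [validD_unique h hIJK]
      exact reD_corner_mem_liftable R hIJK hmin hD
    · rw [validD_unique h (validD_swap hIJK), reD_symm R (Iset ℓ) I]
      exact reD_corner_mem_liftable R hIJK hmin hD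
  · exact reD_mem_liftable_of_not_corner R hIJK hD h hc

theorem liftable_eq_top (hIJK : validD (Iset ℓ) I J K) (hmin : J.min = (J ∪ K).min)
    (hD : IsLiftD ℓ J K Is Js Ks) :
    liftable R ℓ I J K (reD R (Iset (ℓ + 1)) Is Js Ks) = ⊤ := by
  rw [eq_top_iff, ← MvPolynomial.adjoin_range_X, Algebra.adjoin_le_iff]
  rintro _ ⟨e | d, rfl⟩
  · exact X_inl_mem_liftable R hIJK hD e
  · rw [X_inr_eq_reD]
    exact reD_mem_liftable R hIJK hmin hD (validD_of_DIdx d)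

theorem exists_isLiftD (hIJK : validD (Iset ℓ) I J K) {D : RRing R (Iset (ℓ + 1))}
    (hD : D = reDt0 R ℓ I J K ∨ D = reDtm R ℓ I J K) :
    ∃ Is Js Ks, IsLiftD ℓ J K Is Js Ks ∧ D = reD R (Iset (ℓ + 1)) Is Js Ks := by
  have hJ : J ⊆ Iset ℓ := hIJK.2.2.1 ▸ subset_union_left.trans subset_union_right
  have hK : K ⊆ Iset ℓ := hIJK.2.2.1 ▸ subset_union_right.trans subset_union_right
  rcases hD with rfl | rfl
  · by_cases h1 : 1 ∈ I
    · exact ⟨I, J ∪ {ℓ + 1}, K, ⟨validD_union_succ_mid ℓ hIJK, union_succ_inter_Iset ℓ hJ,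
        inter_eq_left.2 hK⟩, by rw [reDt0, if_pos h1]⟩
    · exact ⟨I ∪ {ℓ + 1}, J, K, ⟨validD_union_succ_left ℓ hIJK, inter_eq_left.2 hJ,
        inter_eq_left.2 hK⟩, by rw [reDt0, if_neg h1]⟩
  · exact ⟨I, J, K ∪ {ℓ + 1}, ⟨validD_union_succ_right ℓ hIJK, inter_eq_left.2 hJ,
      union_succ_inter_Iset ℓ hK⟩, rfl⟩

end Main

theorem stmt14_general (R : Type) [CommRing R] (ℓ : ℕ) (I J K : Finset ℕ)
    (hIJK : validD (Iset ℓ) I J K) (hmin : J.min = (J ∪ K).min)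
    (D : RRing R (Iset (ℓ + 1))) (hD : D = reDt0 R ℓ I J K ∨ D = reDtm R ℓ I J K) :
    ∀ p : RRing R (Iset ℓ),
      ∃ q : TensorProduct R (RRing R (insert (ndOf I) I)) (CxRing R (insert 0 (J ∪ K))),
        D * (Fre R ℓ p - Fre R ℓ (FIJK R ℓ I J K q)) ∈ reIdeal R (Iset (ℓ + 1)) := by
  intro p
  obtain ⟨Is, Js, Ks, hlift, rfl⟩ := exists_isLiftD R hIJK hD
  have hp : p ∈ liftable R ℓ I J K (reD R (Iset (ℓ + 1)) Is Js Ks) := by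
    rw [liftable_eq_top R hIJK hmin hlift]
    trivial
  exact hp

/-- `ℝD̃^∘_{I;J,K}·(Im F) ⊆ ℝD̃^∘_{I;J,K}·(Im (F ∘ F_{I;J,K})) + I_{0,[ℓ+1]}`. -/
theorem stmt14 (R : Type) [CommRing R] (ℓ : ℕ) (hℓ : 2 ≤ ℓ) (I J K : Finset ℕ)
    (hIJK : validD (Iset ℓ) I J K) (hmin : J.min = (J ∪ K).min)
    (D : RRing R (Iset (ℓ + 1))) (hD : D = reDt0 R ℓ I J K ∨ D = reDtm R ℓ I J K) :
    ∀ p : RRing R (Iset ℓ),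
      ∃ q : TensorProduct R (RRing R (insert (ndOf I) I)) (CxRing R (insert 0 (J ∪ K))),
        D * (Fre R ℓ p - Fre R ℓ (FIJK R ℓ I J K q)) ∈ reIdeal R (Iset (ℓ + 1)) :=
  stmt14_general R ℓ I J K hIJK hmin D hD

end
end

section
/- Define rational numbers h^p_ℓ for integers ℓ≥3 and p∈ℤ by: h^p_ℓ=0 for p<0; h^p_3=1 if p=0 and h^p_3=0 otherwise; and h^p_{ℓ+1} = h^p_ℓ + h^{p−2}_ℓ + (1/2)·Σ_{j=2}^{ℓ−2} C(ℓ,j)·Σ_{q=0}^{p−2} h^q_{j+1}·h^{p−2−q}_{ℓ−j+1}. Define rational numbers h^p_{0,ℓ} for integers ℓ≥2 and p∈ℤ by: h^p_{0,ℓ}=0 for p<0; h^p_{0,2}=1 if p∈{0,1} and h^p_{0,2}=0 otherwise; and h^p_{0,ℓ+1} = h^p_{0,ℓ} + h^{p−2}_{0,ℓ} + 2^{ℓ−1}·(h^{p−1}_{ℓ+1} + h^{p−2}_{ℓ+1}) + Σ_{i=1}^{ℓ−2} 2^{ℓ−i}·C(ℓ,i)·Σ_{q=0}^{p−2} h^q_{0,i+1}·h^{p−2−q}_{ℓ−i+1}.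 Then h^1_{0,ℓ} = 2^{ℓ−1} − 1 for every integer ℓ≥2. -/
open MvPolynomial Finset TensorProduct

noncomputable section

/- In degree `p ≤ 1` every quadratic term of both recursions is an empty sum over
`q ∈ [0, p - 2]`, so the recursions become linear: `h^0_ℓ = 1` for all `ℓ ≥ 3`, and
`h^1_{0,ℓ+1} = h^1_{0,ℓ} + 2^{ℓ-1} h^0_{ℓ+1}`, which sums to a geometric series. -/

lemma Icc_zero_sub_two_eq_empty {p : ℤ} (hp : p < 2) : Icc (0 : ℤ) (p - 2) = ∅ :=
  Icc_eq_empty (by omega)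

lemma eq_two_pow_pred_sub_one (a : ℕ → ℚ) (hbase : a 2 = 1)
    (hstep : ∀ ℓ : ℕ, 2 ≤ ℓ → a (ℓ + 1) = a ℓ + 2 ^ (ℓ - 1)) :
    ∀ ℓ : ℕ, 2 ≤ ℓ → a ℓ = 2 ^ (ℓ - 1) - 1 := by
  intro ℓ hℓ
  induction ℓ, hℓ using Nat.le_induction with
  | base => norm_num [hbase]
  | succ n hn ih =>
    obtain ⟨m, rfl⟩ : ∃ m, n = m + 1 := ⟨n - 1, by omega⟩
    rw [hstep _ hn, ih]
    simp only [Nat.add_sub_cancel, pow_succ]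
    ring

lemma h_succ_eq_of_lt_two (h : ℕ → ℤ → ℚ)
    (hneg : ∀ (ℓ : ℕ) (p : ℤ), p < 0 → h ℓ p = 0)
    (hrec : ∀ ℓ : ℕ, 3 ≤ ℓ → ∀ p : ℤ,
      h (ℓ + 1) p = h ℓ p + h ℓ (p - 2) +
        (1 / 2) * ∑ j ∈ Finset.Icc 2 (ℓ - 2), (ℓ.choose j : ℚ) *
          ∑ q ∈ Finset.Icc (0 : ℤ) (p - 2), h (j + 1) q * h (ℓ - j + 1) (p - 2 - q))
    {ℓ : ℕ} (hℓ : 3 ≤ ℓ) {p : ℤ} (hp : p < 2) :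
    h (ℓ + 1) p = h ℓ p := by
  rw [hrec ℓ hℓ p, Icc_zero_sub_two_eq_empty hp, hneg ℓ (p - 2) (by omega)]
  simp

lemma h_zero_eq_one (h : ℕ → ℤ → ℚ)
    (hneg : ∀ (ℓ : ℕ) (p : ℤ), p < 0 → h ℓ p = 0)
    (hbase : h 3 0 = 1)
    (hrec : ∀ ℓ : ℕ, 3 ≤ ℓ → ∀ p : ℤ,
      h (ℓ + 1) p = h ℓ p + h ℓ (p - 2) +
        (1 / 2) * ∑ j ∈ Finset.Icc 2 (ℓ - 2), (ℓ.choose j : ℚ) *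
          ∑ q ∈ Finset.Icc (0 : ℤ) (p - 2), h (j + 1) q * h (ℓ - j + 1) (p - 2 - q)) :
    ∀ ℓ : ℕ, 3 ≤ ℓ → h ℓ 0 = 1 := by
  intro ℓ hℓ
  induction ℓ, hℓ using Nat.le_induction with
  | base => exact hbase
  | succ n hn ih => rw [h_succ_eq_of_lt_two h hneg hrec hn (by norm_num), ih]

lemma h0_succ_one (h h0 : ℕ → ℤ → ℚ)
    (hneg : ∀ (ℓ : ℕ) (p : ℤ), p < 0 → h ℓ p = 0)
    (hzero : ∀ ℓ : ℕ, 3 ≤ ℓ → h ℓ 0 = 1)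
    (h0neg : ∀ (ℓ : ℕ) (p : ℤ), p < 0 → h0 ℓ p = 0)
    (h0rec : ∀ ℓ : ℕ, 2 ≤ ℓ → ∀ p : ℤ,
      h0 (ℓ + 1) p = h0 ℓ p + h0 ℓ (p - 2) +
        2 ^ (ℓ - 1) * (h (ℓ + 1) (p - 1) + h (ℓ + 1) (p - 2)) +
        ∑ i ∈ Finset.Icc 1 (ℓ - 2), 2 ^ (ℓ - i) * (ℓ.choose i : ℚ) *
          ∑ q ∈ Finset.Icc (0 : ℤ) (p - 2), h0 (i + 1) q * h (ℓ - i + 1) (p - 2 - q))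
    {ℓ : ℕ} (hℓ : 2 ≤ ℓ) :
    h0 (ℓ + 1) 1 = h0 ℓ 1 + 2 ^ (ℓ - 1) := by
  rw [h0rec ℓ hℓ 1, Icc_zero_sub_two_eq_empty (by norm_num), h0neg ℓ (1 - 2) (by norm_num),
    hneg (ℓ + 1) (1 - 2) (by norm_num), sub_self, hzero (ℓ + 1) (by omega)]
  simp

/-- For the families `(h^p_ℓ)` and `(h^p_{0,ℓ})` defined by the recursions
`ChomolRec_e` and `RhomolRec_e`, one has `h^1_{0,ℓ} = 2^{ℓ-1} − 1` for every `ℓ ≥ 2`. -/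
theorem stmt17 (h h0 : ℕ → ℤ → ℚ)
    (hneg : ∀ (ℓ : ℕ) (p : ℤ), p < 0 → h ℓ p = 0)
    (hbase : ∀ p : ℤ, h 3 p = if p = 0 then 1 else 0)
    (hrec : ∀ ℓ : ℕ, 3 ≤ ℓ → ∀ p : ℤ,
      h (ℓ + 1) p = h ℓ p + h ℓ (p - 2) +
        (1 / 2) * ∑ j ∈ Finset.Icc 2 (ℓ - 2), (ℓ.choose j : ℚ) *
          ∑ q ∈ Finset.Icc (0 : ℤ) (p - 2), h (j + 1) q * h (ℓ - j + 1) (p - 2 - q))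
    (h0neg : ∀ (ℓ : ℕ) (p : ℤ), p < 0 → h0 ℓ p = 0)
    (h0base : ∀ p : ℤ, h0 2 p = if p = 0 ∨ p = 1 then 1 else 0)
    (h0rec : ∀ ℓ : ℕ, 2 ≤ ℓ → ∀ p : ℤ,
      h0 (ℓ + 1) p = h0 ℓ p + h0 ℓ (p - 2) +
        2 ^ (ℓ - 1) * (h (ℓ + 1) (p - 1) + h (ℓ + 1) (p - 2)) +
        ∑ i ∈ Finset.Icc 1 (ℓ - 2), 2 ^ (ℓ - i) * (ℓ.choose i : ℚ) *
          ∑ q ∈ Finset.Icc (0 : ℤ) (p - 2), h0 (i + 1) q * h (ℓ - i + 1) (p - 2 - q)) :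
    ∀ ℓ : ℕ, 2 ≤ ℓ → h0 ℓ 1 = 2 ^ (ℓ - 1) - 1 := by
  have hzero := h_zero_eq_one h hneg (by simp [hbase]) hrec
  exact eq_two_pow_pred_sub_one (fun ℓ => h0 ℓ 1) (by simp [h0base])
    fun ℓ hℓ => h0_succ_one h h0 hneg hzero h0neg h0rec hℓ

end
end
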